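/- arXiv:1910.05675 — 2 statements merged into one kernel-verified Lean document; each statement's English description precedes it below -/
import Mathlib

section
/- In OΓ_n^{(1,r)}, the eccentricity of the all-zero vertex 0^n equals ⌈nr/(r+1)⌉. -/
/-- Hamming distance between two binary words (as lists). -/
def hdist (u v : List Bool) : ℕ := (List.zipWith bne u v).count true

/-- `w` is an I-Fibonacci (p,r)-code: no factor `1^(r+1)` and no factor `1 0^s 1` with `s < p`
(equivalently: maximal blocks of 1s have length ≤ r and blocks of 1s are separated by ≥ p zeros). -/
def ICode (p r : ℕ) (w : List Bool) : Prop :=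
  ¬ (List.replicate (r + 1) true <:+: w) ∧
  ∀ s < p, ¬ ((true :: (List.replicate s false ++ [true])) <:+: w)

/-- `w` is an O-Fibonacci (p,r)-code: no factor `(10^(p-1))^r 1` and no factor `1 0^s 1`
with `s ≤ p - 2`. -/
def OCode (p r : ℕ) (w : List Bool) : Prop :=
  ¬ (((List.replicate r (true :: List.replicate (p - 1) false)).flatten ++ [true]) <:+: w) ∧
  ∀ s, s + 2 ≤ p → ¬ ((true :: (List.replicate s false ++ [true])) <:+: w)

/-- Vertex type of the I-Fibonacci (p,r)-cube of dimension n. -/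
def IVert (p r n : ℕ) := {w : List Bool // w.length = n ∧ ICode p r w}

/-- Vertex type of the O-Fibonacci (p,r)-cube of dimension n. -/
def OVert (p r n : ℕ) := {w : List Bool // w.length = n ∧ OCode p r w}

/-- The I-Fibonacci (p,r)-cube: vertices adjacent iff they differ in exactly one coordinate. -/
def IGraph (p r n : ℕ) : SimpleGraph (IVert p r n) :=
  SimpleGraph.fromRel (fun u v => hdist u.1 v.1 = 1)

/-- The O-Fibonacci (p,r)-cube. -/
def OGraph (p r n : ℕ) : SimpleGraph (OVert p r n) :=
  SimpleGraph.fromRel (fun u v => hdist u.1 v.1 = 1)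

/-- Eccentricity of a vertex. -/
noncomputable def ecc {V : Type*} (G : SimpleGraph V) (v : V) : ℕ :=
  sSup {d | ∃ u, G.dist v u = d}

/-- Radius of a graph. -/
noncomputable def grad {V : Type*} (G : SimpleGraph V) : ℕ :=
  sInf {e | ∃ v, ecc G v = e}

/-- Diameter of a graph. -/
noncomputable def gdiam {V : Type*} (G : SimpleGraph V) : ℕ :=
  sSup {d | ∃ u v, G.dist u v = d}

/-- Degree of a vertex (number of neighbours). -/
noncomputable def deg {V : Type*} (G : SimpleGraph V) (v : V) : ℕ :=
  {u | G.Adj v u}.ncard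

/-!
Switching any `1` of a word without factor `1^(r+1)` to `0` leaves such a word, so from every
vertex `u` one reaches `0^n` in `|u|₁` steps; since each edge changes one letter, the distance from
`0^n` to `u` is exactly its number of ones. In such a word every maximal run of ones has length at
most `r` and all but the last are followed by a `0`, whence `(r+1)·|u|₁ ≤ r(n+1)`; the prefix of
length `n` of `(1^r 0)^ω` attains `⌊r(n+1)/(r+1)⌋ = ⌈nr/(r+1)⌉`.
-/

theorem List.not_infix_append_cons_of_not_mem {α : Type*} {t a b : List α} {x : α}
    (hx : x ∉ t) (ha : ¬ t <:+: a) (hb : ¬ t <:+: b) : ¬ t <:+: a ++ x :: b := by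
  rintro ⟨s, u, h⟩
  rw [List.append_assoc, List.append_eq_append_iff] at h
  rcases h with ⟨a', rfl, h⟩ | ⟨c, rfl, h⟩
  · rcases List.append_eq_append_iff.mp h with ⟨d, rfl, -⟩ | ⟨d, rfl, hd⟩
    · exact ha ⟨s, d, by simp⟩
    · cases d with
      | nil => exact ha ⟨s, [], by simp⟩
      | cons y d =>
        obtain ⟨rfl, -⟩ := List.cons_eq_cons.mp hd
        simp at hx
  · cases c with
    | nil =>
      cases t with
      | nil => exact hb List.nil_infix
      | cons y t =>
        obtain ⟨rfl, -⟩ := List.cons_eq_cons.mp h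
        simp at hx
    | cons y c =>
      obtain ⟨-, rfl⟩ := List.cons_eq_cons.mp h
      exact hb ⟨c, u, by simp⟩

theorem hdist_self (l : List Bool) : hdist l l = 0 := by
  simp [hdist, List.count_replicate]

theorem hdist_comm (u v : List Bool) : hdist u v = hdist v u := by
  rw [hdist, hdist, List.zipWith_comm_of_comm]
  exact Bool.xor_comm

theorem hdist_triangle {a b c : List Bool} (hab : a.length = b.length)
    (hbc : b.length = c.length) : hdist a c ≤ hdist a b + hdist b c := by
  induction a generalizing b c with
  | nil => simp [hdist]
  | cons x a ih =>
    obtain ⟨y, b, rfl⟩ := List.exists_cons_of_length_eq_add_one hab.symm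
    obtain ⟨z, c, rfl⟩ := List.exists_cons_of_length_eq_add_one hbc.symm
    have := ih (b := b) (c := c) (by simpa using hab) (by simpa using hbc)
    simp only [hdist, List.zipWith_cons_cons, List.count_cons] at this ⊢
    cases x <;> cases y <;> cases z <;> simp <;> omega

theorem hdist_replicate_false (l : List Bool) :
    hdist (List.replicate l.length false) l = l.count true := by
  induction l with
  | nil => rfl
  | cons x l ih =>
    simp only [hdist, List.length_cons, List.replicate_succ, List.zipWith_cons_cons,
      List.count_cons] at ih ⊢
    cases x <;> simp [ih]

theorem hdist_append_true_false (a b : List Bool) :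
    hdist (a ++ true :: b) (a ++ false :: b) = 1 := by
  have := hdist_self a
  have := hdist_self b
  simp_all [hdist, List.zipWith_append]

theorem OCode_one_iff {r : ℕ} {w : List Bool} :
    OCode 1 r w ↔ ¬ List.replicate (r + 1) true <:+: w := by
  simp [OCode, List.replicate_succ']

theorem not_infix_replicate_true_of_append_false {r : ℕ} {a b : List Bool}
    (h : ¬ List.replicate (r + 1) true <:+: a ++ true :: b) :
    ¬ List.replicate (r + 1) true <:+: a ++ false :: b :=
  List.not_infix_append_cons_of_not_mem (by simp)
    (fun ha => h (ha.trans (List.prefix_append _ _).isInfix))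
    (fun hb => h (hb.trans ⟨a ++ [true], [], by simp⟩))

theorem le_of_not_infix_replicate_append {r k : ℕ} {w : List Bool}
    (h : ¬ List.replicate (r + 1) true <:+: List.replicate k true ++ w) : k ≤ r := by
  by_contra! hk
  exact h ((List.infix_replicate_iff.mpr ⟨by simpa, by simp⟩).trans
    (List.prefix_append _ _).isInfix)

/-- A leading run of `k` ones is carried along so that structural induction goes through. -/
theorem count_true_mul_le_of_replicate_append {r k : ℕ} {w : List Bool}
    (h : ¬ List.replicate (r + 1) true <:+: List.replicate k true ++ w) :
    (r + 1) * (k + w.count true) ≤ r * (k + w.length + 1) := by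
  induction w generalizing k with
  | nil =>
    have := le_of_not_infix_replicate_append h
    simp only [List.count_nil, List.length_nil]
    nlinarith
  | cons x w ih =>
    cases x with
    | true =>
      have := ih (k := k + 1) (by simpa [List.replicate_succ'] using h)
      simp only [List.count_cons_self, List.length_cons]
      linarith
    | false =>
      have hk := le_of_not_infix_replicate_append h
      have hw : ¬ List.replicate (r + 1) true <:+: w := fun hw =>
        h (hw.trans ((List.suffix_cons false w).trans (List.suffix_append _ _)).isInfix)
      have := ih (k := 0) (by simpa using hw)
      rw [List.count_cons_of_ne (by decide), List.length_cons]
      rw [zero_add] at this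
      nlinarith

theorem count_true_mul_le {r : ℕ} {w : List Bool}
    (h : ¬ List.replicate (r + 1) true <:+: w) :
    (r + 1) * w.count true ≤ r * (w.length + 1) := by
  simpa using count_true_mul_le_of_replicate_append (k := 0) (by simpa using h)

/-- The prefix of length `n` of the infinite word `(1^r 0)^ω`. -/
def denseWord (r n : ℕ) : List Bool :=
  if n ≤ r then List.replicate n true
  else List.replicate r true ++ false :: denseWord r (n - (r + 1))

theorem denseWord_length (r n : ℕ) : (denseWord r n).length = n := by
  induction n using Nat.strong_induction_on with
  | _ n ih =>
    rw [denseWord]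
    split_ifs with hn
    · simp
    · simp only [List.length_append, List.length_replicate, List.length_cons,
        ih (n - (r + 1)) (by omega)]
      omega

theorem not_infix_denseWord (r n : ℕ) : ¬ List.replicate (r + 1) true <:+: denseWord r n := by
  induction n using Nat.strong_induction_on with
  | _ n ih =>
    rw [denseWord]
    split_ifs with hn
    · intro h
      have := h.length_le
      simp only [List.length_replicate] at this
      omega
    · exact List.not_infix_append_cons_of_not_mem (by simp)
        (fun h => by simpa using h.length_le) (ih _ (by omega))

theorem denseWord_count_true (r n : ℕ) : (denseWord r n).count true = (n * r + r) / (r + 1) := by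
  induction n using Nat.strong_induction_on with
  | _ n ih =>
    rw [denseWord]
    split_ifs with hn
    · rw [List.count_replicate_self]
      symm
      exact Nat.div_eq_of_lt_le (by nlinarith) (by nlinarith)
    · obtain ⟨m, rfl⟩ : ∃ m, n = m + (r + 1) := ⟨n - (r + 1), by omega⟩
      rw [List.count_append, List.count_replicate_self, List.count_cons_of_ne (by decide),
        Nat.add_sub_cancel, ih m (by omega),
        show (m + (r + 1)) * r + r = m * r + r + (r + 1) * r by ring,
        Nat.add_mul_div_left _ _ r.succ_pos, add_comm]

namespace OGraph

variable {p r n : ℕ}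

theorem adj_iff {u w : OVert p r n} : (OGraph p r n).Adj u w ↔ hdist u.1 w.1 = 1 := by
  simp only [OGraph, SimpleGraph.fromRel_adj, hdist_comm w.1, or_self, and_iff_right_iff_imp]
  rintro h rfl
  simp [hdist_self] at h

theorem hdist_le_length {u w : OVert p r n} (q : (OGraph p r n).Walk u w) :
    hdist u.1 w.1 ≤ q.length := by
  induction q with
  | nil => simp [hdist_self]
  | @cons a b c h q ih =>
    have := hdist_triangle (a := a.1) (b := b.1) (c := c.1) (by rw [a.2.1, b.2.1])
      (by rw [b.2.1, c.2.1])
    rw [adj_iff.mp h] at this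
    rw [SimpleGraph.Walk.length_cons]
    omega

theorem exists_adj_count_true_succ (u : OVert 1 r n) (hu : true ∈ u.1) :
    ∃ w : OVert 1 r n, (OGraph 1 r n).Adj u w ∧ w.1.count true + 1 = u.1.count true := by
  obtain ⟨a, b, hab⟩ := List.append_of_mem hu
  have hu' := u.2
  rw [hab, OCode_one_iff] at hu'
  let w : OVert 1 r n := ⟨a ++ false :: b, by simpa using hu'.1,
    OCode_one_iff.mpr (not_infix_replicate_true_of_append_false hu'.2)⟩
  refine ⟨w, ?_, ?_⟩
  · rw [adj_iff, hab, hdist_append_true_false]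
  · simp only [w, hab, List.count_append, List.count_cons_self,
      List.count_cons_of_ne (show false ≠ true by decide)]
    rfl

theorem exists_walk_length_eq_count_true {v : OVert 1 r n} (hv : v.1 = List.replicate n false)
    (u : OVert 1 r n) : ∃ q : (OGraph 1 r n).Walk u v, q.length = u.1.count true := by
  induction hc : u.1.count true generalizing u with
  | zero =>
    obtain rfl : u = v := Subtype.ext <| by
      rw [hv, List.eq_replicate_iff]
      refine ⟨u.2.1, fun x hx => ?_⟩
      cases x
      · rfl
      · exact absurd hx (List.count_eq_zero.mp hc)
    exact ⟨.nil, rfl⟩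
  | succ c ih =>
    obtain ⟨w, huw, hw⟩ := exists_adj_count_true_succ u (List.count_pos_iff.mp (by omega))
    obtain ⟨q, hq⟩ := ih w (by omega)
    exact ⟨.cons huw q, by simp [hq]⟩

theorem dist_eq_count_true {v : OVert 1 r n} (hv : v.1 = List.replicate n false)
    (u : OVert 1 r n) : (OGraph 1 r n).dist v u = u.1.count true := by
  obtain ⟨q, hq⟩ := exists_walk_length_eq_count_true hv u
  refine le_antisymm (hq ▸ SimpleGraph.dist_comm ▸ SimpleGraph.dist_le q) ?_
  obtain ⟨q', hq'⟩ := q.reachable.symm.exists_walk_length_eq_dist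
  have := hdist_le_length q'
  have hcount := hdist_replicate_false u.1
  rw [u.2.1] at hcount
  rwa [hv, hcount, hq'] at this

end OGraph

theorem OGraph_ecc_zero_general (r n : ℕ)
    (v : OVert 1 r n) (hv : v.1 = List.replicate n false) :
    ecc (OGraph 1 r n) v = (n * r + r) / (r + 1) := by
  refine IsGreatest.csSup_eq ⟨?_, ?_⟩
  · let w : OVert 1 r n := ⟨denseWord r n, denseWord_length r n,
      OCode_one_iff.mpr (not_infix_denseWord r n)⟩
    exact ⟨w, (OGraph.dist_eq_count_true hv w).trans (denseWord_count_true r n)⟩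
  · rintro _ ⟨u, rfl⟩
    rw [OGraph.dist_eq_count_true hv u, Nat.le_div_iff_mul_le r.succ_pos, mul_comm]
    have := count_true_mul_le (OCode_one_iff.mp u.2.2)
    rw [u.2.1] at this
    linarith

/-- in `OΓ_n^{(1,r)}` the eccentricity of `0^n` is `⌈nr/(r+1)⌉`. -/
theorem OGraph_ecc_zero (r n : ℕ) (hr : 1 ≤ r) (hn : 1 ≤ n)
    (v : OVert 1 r n) (hv : v.1 = List.replicate n false) :
    ecc (OGraph 1 r n) v = (n * r + r) / (r + 1) :=
  OGraph_ecc_zero_general r n v hv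
end

section
/- For r ≥ 1 and n ≥ 1 with n divisible by r+1, the all-zero word 0^n is the unique central vertex of OΓ_n^{(1,r)}, and rad(OΓ_n^{(1,r)}) = nr/(r+1). -/
/-!
For `p = 1` the vertices of `OΓ_n^{(1,r)}` are the words of length `n = (r + 1) k` without a run of
`r + 1` ones. Each of the `k` aligned blocks of length `r + 1` contains a `0`, so every vertex
has weight at most `r k`, and clearing the `1`s one at a time gives `d(0^n, u) ≤ |u|`; hence
`ecc(0^n) ≤ r k`. Conversely, fix a residue `c` mod `r + 1` and send `v` to the word that is `0`
on the class of `c` and complements `v` elsewhere. This word is again a vertex, and its Hamming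
distance to `v` is `r k` plus the number of `1`s of `v` in the class of `c`. Graph distance
dominates Hamming distance, so every vertex has eccentricity at least `r k`, strictly more when
`c` is the residue of a `1` of `v`.
-/

open Finset SimpleGraph

namespace OFibonacci

theorem hdist_eq_card {u v : List Bool} (h : u.length = v.length) :
    hdist u v = #{i ∈ range u.length | u.getD i false ≠ v.getD i false} := by
  induction u generalizing v with
  | nil => simp [hdist]
  | cons a u ih =>
    cases v with
    | nil => simp at h
    | cons b v =>
      have := ih (Nat.succ.inj h)
      rw [card_filter] at this ⊢
      rw [List.length_cons, sum_range_succ']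
      simp only [hdist, List.zipWith_cons_cons, List.count_cons] at this ⊢
      simp [this]

theorem hdist_comm (u v : List Bool) : hdist u v = hdist v u := by
  simp only [hdist, List.zipWith_comm_of_comm Bool.xor_comm]

theorem hdist_self (u : List Bool) : hdist u u = 0 := by
  simp [hdist, List.count_replicate]

theorem hdist_triangle {u v w : List Bool} (huv : u.length = v.length)
    (hvw : v.length = w.length) : hdist u w ≤ hdist u v + hdist v w := by
  rw [hdist_eq_card huv, hdist_eq_card hvw, hdist_eq_card (huv.trans hvw), ← huv]
  refine (card_le_card fun i => ?_).trans (card_union_le _ _)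
  simp only [mem_filter, mem_union]
  grind

theorem hdist_set_false {u : List Bool} {i : ℕ} (hi : u.getD i false = true) :
    hdist (u.set i false) u = 1 := by
  rw [hdist_eq_card (List.length_set ..), card_eq_one]
  refine ⟨i, ?_⟩
  ext j
  simp only [mem_filter, mem_range, List.length_set, mem_singleton]
  grind

theorem count_true_eq_zero_iff {u : List Bool} :
    u.count true = 0 ↔ u = List.replicate u.length false := by
  simp [List.count_eq_zero, List.eq_replicate_iff]

theorem exists_getD_eq_true {u : List Bool} (h : 0 < u.count true) :
    ∃ t < u.length, u.getD t false = true := by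
  obtain ⟨t, ht, hu⟩ := List.mem_iff_getElem.1 (List.count_pos_iff.1 h)
  exact ⟨t, ht, by simp [ht, hu]⟩

theorem count_set_false {u : List Bool} {i : ℕ} (hi : u.getD i false = true) :
    (u.set i false).count true + 1 = u.count true := by
  induction u generalizing i with
  | nil => simp at hi
  | cons a u ih =>
    cases i with
    | zero => simp_all
    | succ i =>
      simp only [List.set_cons_succ, List.count_cons, List.getD_cons_succ] at hi ⊢
      have := ih hi
      omega

def OnesRunsAtMost (r : ℕ) (u : List Bool) : Prop :=
  ∀ i, i + r < u.length → ∃ j ≤ r, u.getD (i + j) false = false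

theorem oCode_one_iff {r : ℕ} {u : List Bool} : OCode 1 r u ↔ OnesRunsAtMost r u := by
  have hpat : (List.replicate r [true]).flatten ++ [true] = List.replicate (r + 1) true := by
    simp [List.replicate_succ']
  simp only [OCode, OnesRunsAtMost, Nat.sub_self, List.replicate_zero, hpat,
    List.infix_iff_getElem?, List.length_replicate, List.getElem_replicate, Order.lt_add_one_iff,
    not_exists, not_and, not_forall, Nat.reduceLeDiff, IsEmpty.forall_iff, implies_true, and_true,
    List.getD_eq_getElem?_getD]
  refine forall_congr' fun i => imp_congr (by omega)
    ⟨fun ⟨j, hj, h⟩ => ⟨j, hj, by grind⟩, fun ⟨j, hj, h⟩ => ⟨j, hj, by grind⟩⟩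

namespace OnesRunsAtMost

variable {r : ℕ} {u : List Bool}

theorem set_false (h : OnesRunsAtMost r u) (i : ℕ) : OnesRunsAtMost r (u.set i false) := by
  intro x hx
  obtain ⟨j, hj, hf⟩ := h x (by simpa using hx)
  exact ⟨j, hj, by grind⟩

theorem drop (h : OnesRunsAtMost r u) (m : ℕ) : OnesRunsAtMost r (u.drop m) := by
  intro x hx
  obtain ⟨j, hj, hf⟩ := h (m + x) (by simp at hx; omega)
  exact ⟨j, hj, by grind⟩

theorem of_getD_mod_eq {c : ℕ} (hc : c ≤ r)
    (h : ∀ i, i % (r + 1) = c → u.getD i false = false) : OnesRunsAtMost r u := by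
  intro i _
  refine ⟨(c + (r + 1) - i % (r + 1)) % (r + 1), Nat.le_of_lt_succ (Nat.mod_lt _ r.succ_pos),
    h _ ?_⟩
  have := Nat.mod_lt i (by omega : 0 < r + 1)
  have := Nat.div_add_mod i (r + 1)
  rw [Nat.add_mod_mod, show i + (c + (r + 1) - i % (r + 1)) = (r + 1) * (i / (r + 1) + 1) + c by
    rw [Nat.mul_succ]; omega, Nat.mul_add_mod, Nat.mod_eq_of_lt (by omega)]

theorem le_count_false (h : OnesRunsAtMost r u) {k : ℕ} (hlen : u.length = (r + 1) * k) :
    k ≤ u.count false := by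
  induction k generalizing u with
  | zero => simp
  | succ k ih =>
    have hfalse : false ∈ u.take (r + 1) := by
      obtain ⟨j, hj, hf⟩ := h 0 (by rw [hlen, Nat.mul_succ]; omega)
      rw [List.mem_take_iff_getElem]
      exact ⟨j, by rw [hlen, Nat.mul_succ]; omega, by grind⟩
    rw [← u.take_append_drop (r + 1), List.count_append]
    have := ih (h.drop (r + 1)) (by simp [hlen, Nat.mul_succ])
    have := List.count_pos_iff.2 hfalse
    omega

theorem count_true_le (h : OnesRunsAtMost r u) {k : ℕ} (hlen : u.length = (r + 1) * k) :
    u.count true ≤ r * k := by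
  have := h.le_count_false hlen
  have := u.count_true_add_count_false
  rw [hlen, add_mul, one_mul] at this
  omega

end OnesRunsAtMost

theorem card_range_filter_mod_ne (r k : ℕ) (c : Fin (r + 1)) :
    #{i ∈ range ((r + 1) * k) | i % (r + 1) ≠ c} = r * k := by
  have hc : #{i ∈ range ((r + 1) * k) | i % (r + 1) = c} = k := by
    have := Nat.count_modEq_card ((r + 1) * k) r.succ_pos c
    simp only [Nat.mul_mod_right, Nat.not_lt_zero, if_false, add_zero,
      Nat.mul_div_cancel_left _ r.succ_pos, Nat.count_eq_card_filter_range, Nat.ModEq,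
      Nat.mod_eq_of_lt c.isLt] at this
    exact this
  have := card_filter_add_card_filter_not (s := range ((r + 1) * k)) (fun i => i % (r + 1) = c)
  rw [hc, card_range] at this
  simp only [ne_eq]
  linarith [add_one_mul r k]

def farWord (r : ℕ) (c : Fin (r + 1)) (u : List Bool) : List Bool :=
  u.mapIdx fun i b => if i % (r + 1) = c then false else !b

theorem onesRunsAtMost_farWord {r : ℕ} (c : Fin (r + 1)) (u : List Bool) :
    OnesRunsAtMost r (farWord r c u) :=
  OnesRunsAtMost.of_getD_mod_eq (Nat.le_of_lt_succ c.isLt) fun i hi => by grind [farWord]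

theorem hdist_farWord {r : ℕ} (c : Fin (r + 1)) (u : List Bool) :
    hdist u (farWord r c u) =
      #{i ∈ range u.length | i % (r + 1) ≠ c ∨ u.getD i false = true} := by
  rw [hdist_eq_card (v := farWord r c u) (by simp [farWord])]
  refine congrArg card (filter_congr fun i hi => ?_)
  grind [farWord]

theorem mul_le_hdist_farWord {r k : ℕ} (c : Fin (r + 1)) {u : List Bool}
    (hu : u.length = (r + 1) * k) : r * k ≤ hdist u (farWord r c u) := by
  rw [hdist_farWord, hu, ← card_range_filter_mod_ne r k c]
  exact card_le_card (monotone_filter_right _ fun _ _ => Or.inl)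

theorem mul_lt_hdist_farWord {r k : ℕ} (c : Fin (r + 1)) {u : List Bool}
    (hu : u.length = (r + 1) * k) {t : ℕ} (ht : t < u.length) (htc : t % (r + 1) = c)
    (h : u.getD t false = true) : r * k < hdist u (farWord r c u) := by
  rw [hdist_farWord, hu, ← card_range_filter_mod_ne r k c]
  refine card_lt_card <|
    (ssubset_iff_of_subset (monotone_filter_right _ fun _ _ => Or.inl)).2 ⟨t, ?_⟩
  simp_all

section Eccentricity

variable {V : Type*} (G : SimpleGraph V)

theorem dist_le_ecc [Finite V] (v u : V) : G.dist v u ≤ ecc G v :=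
  le_csSup (Set.finite_range (G.dist v)).bddAbove ⟨u, rfl⟩

theorem ecc_le {v : V} {e : ℕ} (h : ∀ u, G.dist v u ≤ e) : ecc G v ≤ e :=
  csSup_le ⟨_, v, rfl⟩ (by rintro _ ⟨u, rfl⟩; exact h u)

theorem grad_eq_ecc {v₀ : V} (h : ∀ v, ecc G v₀ ≤ ecc G v) : grad G = ecc G v₀ :=
  le_antisymm (Nat.sInf_le ⟨v₀, rfl⟩) <|
    le_csInf ⟨_, v₀, rfl⟩ (by rintro _ ⟨v, rfl⟩; exact h v)

end Eccentricity

instance (p r n : ℕ) : Finite (OVert p r n) :=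
  Finite.of_injective (β := List.Vector Bool n) (fun v => ⟨v.1, v.2.1⟩)
    fun _ _ h => Subtype.ext (Subtype.mk.inj h)

section Hypercube

variable {p r n : ℕ}

theorem hdist_eq_one_of_adj {u v : OVert p r n} (h : (OGraph p r n).Adj u v) :
    hdist u.1 v.1 = 1 :=
  ((fromRel_adj _ u v).1 h).2.elim id (hdist_comm u.1 v.1 ▸ ·)

theorem hdist_le_length {u v : OVert p r n} (w : (OGraph p r n).Walk u v) :
    hdist u.1 v.1 ≤ w.length := by
  induction w with
  | nil => simp [hdist_self]
  | @cons a b c hab w ih =>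
    have := hdist_triangle (a.2.1.trans b.2.1.symm) (b.2.1.trans c.2.1.symm)
    rw [Walk.length_cons, ← hdist_eq_one_of_adj hab]
    omega

theorem hdist_le_dist {u v : OVert p r n} (h : (OGraph p r n).Reachable u v) :
    hdist u.1 v.1 ≤ (OGraph p r n).dist u v := by
  obtain ⟨w, hw⟩ := h.exists_walk_length_eq_dist
  exact hw ▸ hdist_le_length w

end Hypercube

variable {r n : ℕ}

def zeroVert (r n : ℕ) : OVert 1 r n :=
  ⟨List.replicate n false, List.length_replicate,
    oCode_one_iff.2 fun _ _ => ⟨0, by simp, by simp⟩⟩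

theorem exists_walk_zeroVert (u : OVert 1 r n) :
    ∃ w : (OGraph 1 r n).Walk (zeroVert r n) u, w.length = u.1.count true := by
  induction hc : u.1.count true generalizing u with
  | zero =>
    have hu := count_true_eq_zero_iff.1 hc
    rw [u.2.1] at hu
    obtain rfl : u = zeroVert r n := Subtype.ext hu
    exact ⟨Walk.nil, rfl⟩
  | succ m ih =>
    obtain ⟨t, -, ht⟩ := exists_getD_eq_true (u := u.1) (by omega)
    let u' : OVert 1 r n := ⟨u.1.set t false, by simp [u.2.1],
      oCode_one_iff.2 ((oCode_one_iff.1 u.2.2).set_false t)⟩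
    have hc' : (u.1.set t false).count true = m := by have := count_set_false ht; omega
    have hadj : (OGraph 1 r n).Adj u' u := by
      refine (fromRel_adj _ _ _).2 ⟨fun e => ?_, .inl (hdist_set_false ht)⟩
      have : (u.1.set t false).count true = u.1.count true :=
        congrArg (fun x : OVert 1 r n => x.1.count true) e
      omega
    obtain ⟨w, hw⟩ := ih u' hc'
    exact ⟨w.concat hadj, by rw [Walk.length_concat, hw]⟩

theorem dist_zeroVert_le (u : OVert 1 r n) :
    (OGraph 1 r n).dist (zeroVert r n) u ≤ u.1.count true :=
  have ⟨w, hw⟩ := exists_walk_zeroVert u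
  hw ▸ dist_le w

theorem OGraph_one_preconnected : (OGraph 1 r n).Preconnected := fun u v =>
  have ⟨w₁, _⟩ := exists_walk_zeroVert u
  have ⟨w₂, _⟩ := exists_walk_zeroVert v
  ⟨w₁.reverse.append w₂⟩

def farVert (c : Fin (r + 1)) (v : OVert 1 r n) : OVert 1 r n :=
  ⟨farWord r c v.1, by simp [farWord, v.2.1], oCode_one_iff.2 (onesRunsAtMost_farWord c v.1)⟩

theorem le_ecc_of_le_hdist {v u : OVert 1 r n} {e : ℕ} (h : e ≤ hdist v.1 u.1) :
    e ≤ ecc (OGraph 1 r n) v :=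
  h.trans <| (hdist_le_dist (OGraph_one_preconnected v u)).trans (dist_le_ecc _ v u)

theorem mul_le_ecc {k : ℕ} (v : OVert 1 r ((r + 1) * k)) : r * k ≤ ecc (OGraph 1 r _) v :=
  le_ecc_of_le_hdist (u := farVert 0 v) (mul_le_hdist_farWord 0 v.2.1)

theorem mul_lt_ecc {k : ℕ} (v : OVert 1 r ((r + 1) * k)) (hv : 0 < v.1.count true) :
    r * k < ecc (OGraph 1 r _) v := by
  obtain ⟨t, ht, h⟩ := exists_getD_eq_true hv
  exact le_ecc_of_le_hdist (u := farVert ⟨t % (r + 1), Nat.mod_lt t r.succ_pos⟩ v)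
    (mul_lt_hdist_farWord _ v.2.1 ht rfl h)

theorem ecc_zeroVert (k : ℕ) : ecc (OGraph 1 r ((r + 1) * k)) (zeroVert r _) = r * k :=
  le_antisymm
    (ecc_le _ fun u => (dist_zeroVert_le u).trans ((oCode_one_iff.1 u.2.2).count_true_le u.2.1))
    (mul_le_ecc _)

end OFibonacci

open OFibonacci

theorem OGraph_radius_center_p_one_general (r n : ℕ)
    (hdvd : (r + 1) ∣ n) :
    grad (OGraph 1 r n) = n * r / (r + 1) ∧
    ∀ v : OVert 1 r n,
      (ecc (OGraph 1 r n) v = grad (OGraph 1 r n) ↔ v.1 = List.replicate n false) := by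
  obtain ⟨k, rfl⟩ := hdvd
  have hgrad : grad (OGraph 1 r ((r + 1) * k)) = r * k :=
    ecc_zeroVert (r := r) k ▸ grad_eq_ecc _ fun v => ecc_zeroVert (r := r) k ▸ mul_le_ecc v
  refine ⟨?_, fun v => ?_⟩
  · rw [hgrad, mul_right_comm, mul_assoc, Nat.mul_div_cancel_left _ r.succ_pos]
  · rw [hgrad]
    constructor
    · intro h
      by_contra hv
      refine (mul_lt_ecc v (Nat.pos_of_ne_zero fun h0 => hv ?_)).ne' h
      simpa [v.2.1] using count_true_eq_zero_iff.1 h0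
    · intro hv
      rw [show v = zeroVert r _ from Subtype.ext hv, ecc_zeroVert]

/-- for `(r+1) ∣ n`, `rad(OΓ_n^{(1,r)}) = nr/(r+1)` and `0^n` is the
unique central vertex. -/
theorem OGraph_radius_center_p_one (r n : ℕ) (hr : 1 ≤ r) (hn : 1 ≤ n)
    (hdvd : (r + 1) ∣ n) :
    grad (OGraph 1 r n) = n * r / (r + 1) ∧
    ∀ v : OVert 1 r n,
      (ecc (OGraph 1 r n) v = grad (OGraph 1 r n) ↔ v.1 = List.replicate n false) :=
  OGraph_radius_center_p_one_general r n hdvd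
end
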